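/- arXiv:1612.02079 — 8 statements merged into one kernel-verified Lean document; each statement's English description precedes it below -/
import Mathlib

section
/- Let 𝓛 be the explicit real 18×18 block matrix with 3×3 blocks L₀₀ = diag(0,−1,−3), L₁₀ = [[−1/3,0,−4/3],[0,−1,0],[−2/3,0,1/3]], L₀₁ = [[0,−2/3,0],[−1,0,−1],[0,−1/3,0]] arranged as: L₀₀ on each of the six diagonal block positions, L₁₀ in block positions (1,2),(2,4),(3,5), and L₀₁ in block positions (1,3),(2,5),(3,6). Let V be the 18×6 real matrix whose columns are v⁰⁰ = e₁, v¹⁰ = −(2/9)e₃ + e₄, v⁰¹ = −e₂ + e₇, v²⁰ = −(4/81)e₃ − (2/9)e₆ + e₁₀, v¹¹ = (8/9)e₂ − e₅ − (2/9)e₉ + e₁₃, v⁰² = (1/9)e₃ − e₈ + e₁₆ (eᵢ the standard basis of ℝ¹⁸), and let A be the 6×6 matrix whose only nonzero entries are A₁₂ = −1/3, A₁₄ = 8/27, A₁₆ = 2/3, A₂₄ = −1/3, A₃₅ = −1/3. Then 𝓛V = VA, the six columns of V are linearly independent, and A³ = 0. -/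
/-- `L₀₀ = diag(0,−1,−3)`. -/
noncomputable def L00 : Matrix (Fin 3) (Fin 3) ℝ := !![0,0,0; 0,-1,0; 0,0,-3]

/-- `L₁₀`. -/
noncomputable def L10 : Matrix (Fin 3) (Fin 3) ℝ := !![-1/3,0,-4/3; 0,-1,0; -2/3,0,1/3]

/-- `L₀₁`. -/
noncomputable def L01 : Matrix (Fin 3) (Fin 3) ℝ := !![0,-2/3,0; -1,0,-1; 0,-1/3,0]

/-- The 6×6 array of 3×3 blocks: `L₀₀` on the six diagonal block positions, `L₁₀` in block
positions `(1,2),(2,4),(3,5)` and `L₀₁` in block positions `(1,3),(2,5),(3,6)`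
(1-indexed, so 0-indexed `(0,1),(1,3),(2,4)` and `(0,2),(1,4),(2,5)`), zero elsewhere. -/
noncomputable def blockOf : Fin 6 → Fin 6 → Matrix (Fin 3) (Fin 3) ℝ := fun i j =>
  if i = j then L00
  else if (i, j) = (0, 1) ∨ (i, j) = (1, 3) ∨ (i, j) = (2, 4) then L10
  else if (i, j) = (0, 2) ∨ (i, j) = (1, 4) ∨ (i, j) = (2, 5) then L01
  else 0

/-- The explicit 18×18 block matrix `𝓛`. -/
noncomputable def calL : Matrix (Fin 18) (Fin 18) ℝ :=
  Matrix.of fun i j =>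
    blockOf ⟨i.val / 3, by omega⟩ ⟨j.val / 3, by omega⟩
      ⟨i.val % 3, by omega⟩ ⟨j.val % 3, by omega⟩

/-- the standard basis vector `eₖ` of `ℝ¹⁸` (here `0`-indexed: `stdE 0 = e₁`, …). -/
noncomputable def stdE (k : Fin 18) : Fin 18 → ℝ := fun i => if i = k then 1 else 0

/-- the 18×6 matrix `V` whose columns span the slow subspace. -/
noncomputable def Vmat : Matrix (Fin 18) (Fin 6) ℝ :=
  Matrix.of fun i j =>
    (![ stdE 0,
        -(2/9 : ℝ) • stdE 2 + stdE 3,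
        -stdE 1 + stdE 6,
        -(4/81 : ℝ) • stdE 2 - (2/9 : ℝ) • stdE 5 + stdE 9,
        (8/9 : ℝ) • stdE 1 - stdE 4 - (2/9 : ℝ) • stdE 8 + stdE 12,
        (1/9 : ℝ) • stdE 2 - stdE 7 + stdE 15 ] j) i

/-- the 6×6 matrix `A`, with only nonzero entries
`A₁₂ = −1/3, A₁₄ = 8/27, A₁₆ = 2/3, A₂₄ = −1/3, A₃₅ = −1/3` (1-indexed). -/
noncomputable def Amat : Matrix (Fin 6) (Fin 6) ℝ :=
  !![0, -1/3, 0, 8/27, 0, 2/3;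
     0, 0, 0, -1/3, 0, 0;
     0, 0, 0, 0, -1/3, 0;
     0, 0, 0, 0, 0, 0;
     0, 0, 0, 0, 0, 0;
     0, 0, 0, 0, 0, 0]

/-! ### Auxiliary integer (`81`-scaled) versions, for kernel computation -/

def L00Z : Matrix (Fin 3) (Fin 3) ℤ := !![0,0,0; 0,-81,0; 0,0,-243]
def L10Z : Matrix (Fin 3) (Fin 3) ℤ := !![-27,0,-108; 0,-81,0; -54,0,27]
def L01Z : Matrix (Fin 3) (Fin 3) ℤ := !![0,-54,0; -81,0,-81; 0,-27,0]

def blockOfZ : Fin 6 → Fin 6 → Matrix (Fin 3) (Fin 3) ℤ := fun i j =>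
  if i = j then L00Z
  else if (i, j) = (0, 1) ∨ (i, j) = (1, 3) ∨ (i, j) = (2, 4) then L10Z
  else if (i, j) = (0, 2) ∨ (i, j) = (1, 4) ∨ (i, j) = (2, 5) then L01Z
  else 0

def calLZ : Matrix (Fin 18) (Fin 18) ℤ :=
  Matrix.of fun i j =>
    blockOfZ ⟨i.val / 3, by omega⟩ ⟨j.val / 3, by omega⟩
      ⟨i.val % 3, by omega⟩ ⟨j.val % 3, by omega⟩

def stdEZ (k : Fin 18) : Fin 18 → ℤ := fun i => if i = k then 1 else 0

def VmatZ : Matrix (Fin 18) (Fin 6) ℤ :=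
  Matrix.of fun i j =>
    (![ (81 : ℤ) • stdEZ 0,
        -(18 : ℤ) • stdEZ 2 + (81 : ℤ) • stdEZ 3,
        -(81 : ℤ) • stdEZ 1 + (81 : ℤ) • stdEZ 6,
        -(4 : ℤ) • stdEZ 2 - (18 : ℤ) • stdEZ 5 + (81 : ℤ) • stdEZ 9,
        (72 : ℤ) • stdEZ 1 - (81 : ℤ) • stdEZ 4 - (18 : ℤ) • stdEZ 8 + (81 : ℤ) • stdEZ 12,
        (9 : ℤ) • stdEZ 2 - (81 : ℤ) • stdEZ 7 + (81 : ℤ) • stdEZ 15 ] j) i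

def AmatZ : Matrix (Fin 6) (Fin 6) ℤ :=
  !![0, -27, 0, 24, 0, 54;
     0, 0, 0, -27, 0, 0;
     0, 0, 0, 0, -27, 0;
     0, 0, 0, 0, 0, 0;
     0, 0, 0, 0, 0, 0;
     0, 0, 0, 0, 0, 0]

lemma keyZ : calLZ * VmatZ = VmatZ * AmatZ := by decide

lemma keyZ3 : AmatZ ^ 3 = 0 := by decide

@[simp] lemma cons_val_five' {α : Type*} (x : α) (u : Fin 5 → α) :
    Matrix.vecCons x u 5 = u 4 := rfl

abbrev fZR : ℤ →+* ℝ := Int.castRingHom ℝ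

lemma hL00 : L00Z.map (fZR : ℤ → ℝ) = (81 : ℝ) • L00 := by
  ext i j; fin_cases i <;> fin_cases j <;>
    norm_num [L00Z, L00, Matrix.map_apply, Matrix.smul_apply]

lemma hL10 : L10Z.map (fZR : ℤ → ℝ) = (81 : ℝ) • L10 := by
  ext i j; fin_cases i <;> fin_cases j <;>
    norm_num [L10Z, L10, Matrix.map_apply, Matrix.smul_apply]

lemma hL01 : L01Z.map (fZR : ℤ → ℝ) = (81 : ℝ) • L01 := by
  ext i j; fin_cases i <;> fin_cases j <;>
    norm_num [L01Z, L01, Matrix.map_apply, Matrix.smul_apply]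

lemma hblock (a b : Fin 6) : (blockOfZ a b).map (fZR : ℤ → ℝ) = (81 : ℝ) • blockOf a b := by
  unfold blockOf blockOfZ
  split_ifs
  · exact hL00
  · exact hL10
  · exact hL01
  · simp

lemma hLmap : calLZ.map (fZR : ℤ → ℝ) = (81 : ℝ) • calL := by
  ext i j
  have := congrFun (congrFun
    (hblock ⟨i.val / 3, by omega⟩ ⟨j.val / 3, by omega⟩)
    ⟨i.val % 3, by omega⟩) ⟨j.val % 3, by omega⟩
  simpa [calL, calLZ, Matrix.map_apply, Matrix.smul_apply] using this

lemma hVmap : VmatZ.map (fZR : ℤ → ℝ) = (81 : ℝ) • Vmat := by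
  ext i j
  fin_cases j <;>
    simp [Vmat, VmatZ, stdE, stdEZ, Matrix.map_apply, Matrix.smul_apply] <;>
    (try split_ifs) <;> norm_num

lemma hAmap : AmatZ.map (fZR : ℤ → ℝ) = (81 : ℝ) • Amat := by
  ext i j
  fin_cases i <;> fin_cases j <;>
    norm_num [Amat, AmatZ, Matrix.map_apply, Matrix.smul_apply]

/-- `𝓛V = VA`, the six columns of `V` are linearly independent, and `A³ = 0`. -/
theorem slow_subspace_of_calL :
    calL * Vmat = Vmat * Amat ∧
    LinearIndependent ℝ (fun j : Fin 6 => fun i : Fin 18 => Vmat i j) ∧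
    Amat ^ 3 = 0 := by
  refine ⟨?_, ?_, ?_⟩
  · have h := congrArg (fun M : Matrix (Fin 18) (Fin 6) ℤ => M.map (fZR : ℤ → ℝ)) keyZ
    rw [Matrix.map_mul, Matrix.map_mul, hLmap, hVmap, hAmap, Matrix.smul_mul, Matrix.smul_mul,
      Matrix.mul_smul, Matrix.mul_smul, smul_smul, smul_smul] at h

    exact smul_right_injective (Matrix (Fin 18) (Fin 6) ℝ)
      (by norm_num : (81 * 81 : ℝ) ≠ 0) h
  · rw [Fintype.linearIndependent_iff]
    intro g hg j
    have h0 := congrFun hg 0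
    have h3 := congrFun hg 3
    have h6 := congrFun hg 6
    have h9 := congrFun hg 9
    have h12 := congrFun hg 12
    have h15 := congrFun hg 15
    simp (config := { decide := true }) [Fin.sum_univ_six, Vmat, stdE]
      at h0 h3 h6 h9 h12 h15
    fin_cases j <;> simp_all
  · have h := congrArg (fun M => fZR.mapMatrix M) keyZ3
    simp only [map_pow, map_zero, RingHom.mapMatrix_apply] at h
    rw [hAmap, smul_pow] at h
    rcases smul_eq_zero.mp h with h' | h'
    · norm_num at h'
    · exact h'
end

section
/- Let L₁₀ = [[−1/3,0,−4/3],[0,−1,0],[−2/3,0,1/3]], L₀₁ = [[0,−2/3,0],[−1,0,−1],[0,−1/3,0]], L₀₀ = diag(0,−1,−3), and set V⁰⁰ = Z⁰ = (1,0,0) ∈ ℝ³, A₀₀ = 0. Then there exist unique real numbers A_{mn} and vectors V^{mn} ∈ ℝ³ for all pairs (m,n) with 0 < m+n ≤ 3 satisfying the recursion: A_{mn} = Σ ⟨Z⁰, L_{kl} V^{(m−k)(n−l)}⟩ summed over (k,l) ∈ {(1,0),(0,1)} with (k,l) ≤ (m,n); L₀₀V^{mn} = −Σ_{(k,l)∈{(1,0),(0,1)},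 (k,l)≤(m,n)} L_{kl}V^{(m−k)(n−l)} + Σ_{(0,0)<(k,l)≤(m,n)} A_{kl} V^{(m−k)(n−l)}; and ⟨Z⁰, V^{mn}⟩ = 0. Moreover the resulting coefficients are A₁₀ = −1/3, A₀₁ = 0, A₂₀ = 8/27, A₁₁ = 0, A₀₂ = 2/3, A₃₀ = 16/243, A₂₁ = 0, A₁₂ = −20/27, A₀₃ = 0. -/
open Matrix

/-- `Z⁰ = (1,0,0)`. -/
noncomputable def Z0 : Fin 3 → ℝ := ![1, 0, 0]

/-- The recursive system defining the coefficients `A_{mn}` and vectors `V^{mn}` for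
`0 < m+n ≤ 3`, starting from `V⁰⁰ = Z⁰ = (1,0,0)` and `A₀₀ = 0`:
`A_{mn} = Σ_{(k,l)∈{(1,0),(0,1)}, (k,l)≤(m,n)} ⟨Z⁰, L_{kl} V^{(m−k)(n−l)}⟩`,
`L₀₀V^{mn} = −Σ_{(k,l)∈{(1,0),(0,1)}, (k,l)≤(m,n)} L_{kl}V^{(m−k)(n−l)}
            + Σ_{(0,0)<(k,l)≤(m,n)} A_{kl} V^{(m−k)(n−l)}`, and `⟨Z⁰, V^{mn}⟩ = 0`. -/
def RWrecursion (A : ℕ → ℕ → ℝ) (Vv : ℕ → ℕ → Fin 3 → ℝ) : Prop :=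
  Vv 0 0 = ![1, 0, 0] ∧ A 0 0 = 0 ∧
  ∀ m n : ℕ, 0 < m + n → m + n ≤ 3 →
    (A m n = (if 1 ≤ m then Z0 ⬝ᵥ L10.mulVec (Vv (m - 1) n) else 0)
             + (if 1 ≤ n then Z0 ⬝ᵥ L01.mulVec (Vv m (n - 1)) else 0)) ∧
    (L00.mulVec (Vv m n) =
      -((if 1 ≤ m then L10.mulVec (Vv (m - 1) n) else 0)
        + (if 1 ≤ n then L01.mulVec (Vv m (n - 1)) else 0))
      + ∑ k ∈ Finset.range (m + 1), ∑ l ∈ Finset.range (n + 1),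
          (if (k, l) ≠ (0, 0) then A k l • Vv (m - k) (n - l) else 0)) ∧
    Z0 ⬝ᵥ Vv m n = 0

/-!
`L₀₀ = diag(0,−1,−3)` is injective on the plane `⟨Z⁰, ·⟩ = 0`, so the recursion determines the
data degree by degree in `m + n`: `A_{mn}` is read off from the vectors of degree `m + n − 1`,
and then `V^{mn}` from `L₀₀V^{mn}`, which involves only `A_{mn}` and data of lower degree,
together with its normalisation `⟨Z⁰, V^{mn}⟩ = 0`. The values themselves come from running the
recursion once by hand; the resulting table only has to be checked.
-/

theorem eq_of_L00_mulVec_eq_of_Z0_dotProduct_eq {v w : Fin 3 → ℝ}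
    (hL : L00 *ᵥ v = L00 *ᵥ w) (hZ : Z0 ⬝ᵥ v = Z0 ⬝ᵥ w) : v = w := by
  ext i
  fin_cases i
  · simpa [Z0, vec3_dotProduct, vecHead] using hZ
  · simpa [L00, -mulVec_cons, vecHead, vecTail] using congrFun hL 1
  · simpa [L00, -mulVec_cons, vecHead, vecTail] using congrFun hL 2

namespace RWrecursion

variable {A A' : ℕ → ℕ → ℝ} {Vv Vv' : ℕ → ℕ → Fin 3 → ℝ}

theorem eq_of_forall_add_lt (h : RWrecursion A Vv) (h' : RWrecursion A' Vv') {m n : ℕ}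
    (hpos : 0 < m + n) (h3 : m + n ≤ 3)
    (hA : ∀ k l, k + l < m + n → A k l = A' k l)
    (hV : ∀ k l, k + l < m + n → Vv k l = Vv' k l) :
    A m n = A' m n ∧ Vv m n = Vv' m n := by
  obtain ⟨hAmn, hLmn, hZmn⟩ := h.2.2 m n hpos h3
  obtain ⟨hAmn', hLmn', hZmn'⟩ := h'.2.2 m n hpos h3
  have hV10 : 1 ≤ m → Vv (m - 1) n = Vv' (m - 1) n := fun _ => hV _ _ (by omega)
  have hV01 : 1 ≤ n → Vv m (n - 1) = Vv' m (n - 1) := fun _ => hV _ _ (by omega)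
  have hA_eq : A m n = A' m n := by
    rw [hAmn, hAmn']
    simp +contextual only [hV10, hV01]
  refine ⟨hA_eq, eq_of_L00_mulVec_eq_of_Z0_dotProduct_eq ?_ (hZmn.trans hZmn'.symm)⟩
  rw [hLmn, hLmn']
  congr 1
  · simp +contextual only [hV10, hV01]
  · refine Finset.sum_congr rfl fun k hk => Finset.sum_congr rfl fun l hl => ?_
    rw [Finset.mem_range] at hk hl
    split_ifs with hkl
    · rw [Ne, Prod.mk.injEq] at hkl
      rw [hV _ _ (by omega)]
      rcases Nat.lt_or_ge (k + l) (m + n) with hlt | hge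
      · rw [hA k l hlt]
      · obtain ⟨rfl, rfl⟩ : k = m ∧ l = n := by omega
        rw [hA_eq]
    · rfl

theorem eq_of_add_le_three (h : RWrecursion A Vv) (h' : RWrecursion A' Vv') {m n : ℕ}
    (h3 : m + n ≤ 3) : A m n = A' m n ∧ Vv m n = Vv' m n := by
  induction hd : m + n using Nat.strong_induction_on generalizing m n with
  | _ d ih =>
    rcases Nat.eq_zero_or_pos d with rfl | hpos
    · obtain ⟨rfl, rfl⟩ : m = 0 ∧ n = 0 := by omega
      exact ⟨h.2.1.trans h'.2.1.symm, h.1.trans h'.1.symm⟩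
    · subst hd
      exact eq_of_forall_add_lt h h' hpos h3
        (fun k l hkl => (ih _ hkl (by omega) rfl).1)
        (fun k l hkl => (ih _ hkl (by omega) rfl).2)

end RWrecursion

noncomputable def rwCoeff : ℕ → ℕ → ℝ
  | 1, 0 => -1/3 | 2, 0 => 8/27 | 0, 2 => 2/3 | 3, 0 => 16/243 | 1, 2 => -20/27
  | _, _ => 0

noncomputable def rwVector : ℕ → ℕ → Fin 3 → ℝ
  | 0, 0 => ![1, 0, 0]
  | 1, 0 => ![0, 0, -2/9]
  | 0, 1 => ![0, -1, 0]
  | 2, 0 => ![0, 0, -4/81]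
  | 1, 1 => ![0, 8/9, 0]
  | 0, 2 => ![0, 0, 1/9]
  | 3, 0 => ![0, 0, 8/729]
  | 2, 1 => ![0, -20/81, 0]
  | 1, 2 => ![0, 0, -2/81]
  | 0, 3 => ![0, 5/9, 0]
  | _, _ => 0

theorem rwRecursion_rwCoeff_rwVector : RWrecursion rwCoeff rwVector := by
  refine ⟨rfl, rfl, fun m n hpos h3 => ?_⟩
  have hm : m ≤ 3 := by omega
  have hn : n ≤ 3 := by omega
  interval_cases m <;> interval_cases n <;> try omega
  all_goals
    norm_num [-mulVec_cons, Finset.sum_range_succ, rwCoeff, rwVector, Z0, L00, L10, L01]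

/-- There exist unique `A_{mn} ∈ ℝ` and `V^{mn} ∈ ℝ³` for `0 < m+n ≤ 3` satisfying the
recursion, and the resulting coefficients are `A₁₀ = −1/3`, `A₀₁ = 0`, `A₂₀ = 8/27`,
`A₁₁ = 0`, `A₀₂ = 2/3`, `A₃₀ = 16/243`, `A₂₁ = 0`, `A₁₂ = −20/27`, `A₀₃ = 0`. -/
theorem randomWalker_model_coefficients :
    (∃ (A : ℕ → ℕ → ℝ) (Vv : ℕ → ℕ → Fin 3 → ℝ),
      RWrecursion A Vv ∧
      A 1 0 = -1/3 ∧ A 0 1 = 0 ∧ A 2 0 = 8/27 ∧ A 1 1 = 0 ∧ A 0 2 = 2/3 ∧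
      A 3 0 = 16/243 ∧ A 2 1 = 0 ∧ A 1 2 = -20/27 ∧ A 0 3 = 0) ∧
    (∀ (A A' : ℕ → ℕ → ℝ) (Vv Vv' : ℕ → ℕ → Fin 3 → ℝ),
      RWrecursion A Vv → RWrecursion A' Vv' →
      ∀ m n : ℕ, 0 < m + n → m + n ≤ 3 → A m n = A' m n ∧ Vv m n = Vv' m n) :=
  ⟨⟨rwCoeff, rwVector, rwRecursion_rwCoeff_rwVector, by norm_num [rwCoeff]⟩,
    fun _ _ _ _ h h' m n _ h3 => h.eq_of_add_le_three h' h3⟩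
end

section
/- Let 𝓛 (18×18), V (18×6) and A (6×6) be the explicit real matrices of the random walker slow subspace, satisfying 𝓛V = VA with the columns of V linearly independent. If y : ℝ → ℝ¹⁸ is differentiable with y′(t) = 𝓛y(t) for all t and y(0) lies in the column space of V, then there is a unique differentiable c : ℝ → ℝ⁶ with y(t) = Vc(t) for all t; this c satisfies c′ = Ac, and in particular, writing c = (c₀₀, c₁₀, c₀₁, c₂₀, c₁₁, c₀₂), the first coordinate obeys c₀₀′(t) = −(1/3)c₁₀(t) + (8/27)c₂₀(t) + (2/3)c₀₂(t). -/
/-! Since `𝓛V = VA`, the curve `t ↦ V exp(tA) c₀` solves `y′ = 𝓛y` with the same initial value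
as `y`, so it is `y` by uniqueness for Lipschitz ODEs. The matrix `V` has the explicit left inverse
`W` reading off the coordinates `e₁, e₄, …, e₁₆`; it makes `c` unique, and `c = Wy` gives
`c′ = W𝓛Vc = WVAc = Ac`. -/

open NormedSpace

section LinearODE

variable {E F : Type*} [NormedAddCommGroup E] [NormedSpace ℝ E]
  [NormedAddCommGroup F] [NormedSpace ℝ F]

theorem linearODE_solution_unique {L : E →L[ℝ] E} {f g : ℝ → E}
    (hf : ∀ t, HasDerivAt f (L (f t)) t) (hg : ∀ t, HasDerivAt g (L (g t)) t)
    (h₀ : f 0 = g 0) : f = g :=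
  ODE_solution_unique_univ (v := fun _ => L) (s := fun _ => Set.univ) (t₀ := 0)
    (fun _ => L.lipschitz.lipschitzOnWith) (fun t => ⟨hf t, trivial⟩)
    (fun t => ⟨hg t, trivial⟩) h₀

theorem ContinuousLinearMap.hasDerivAt_exp_smul_apply [CompleteSpace F] (A : F →L[ℝ] F)
    (x : F) (t : ℝ) : HasDerivAt (fun s : ℝ => exp (s • A) x) (A (exp (t • A) x)) t := by
  simpa using (hasDerivAt_exp_smul_const' A t).clm_apply (hasDerivAt_const t x)

variable {L : E →L[ℝ] E} {V : F →L[ℝ] E} {A : F →L[ℝ] F}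

theorem linearODE_map_solution (hLV : L ∘L V = V ∘L A) {c : ℝ → F} {t : ℝ}
    (hc : HasDerivAt c (A (c t)) t) : HasDerivAt (fun s => V (c s)) (L (V (c t))) t := by
  rw [← ContinuousLinearMap.comp_apply L V, hLV]
  exact V.hasFDerivAt.comp_hasDerivAt t hc

theorem linearODE_eq_map_exp_smul [CompleteSpace F] (hLV : L ∘L V = V ∘L A)
    {y : ℝ → E} (hy : ∀ t, HasDerivAt y (L (y t)) t) {c₀ : F} (hy₀ : y 0 = V c₀) :
    y = fun t => V (exp (t • A) c₀) :=
  linearODE_solution_unique hy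
    (fun t => linearODE_map_solution hLV (A.hasDerivAt_exp_smul_apply c₀ t))
    (by simpa using hy₀)

theorem linearODE_reduced_hasDerivAt (hLV : L ∘L V = V ∘L A) {W : E →L[ℝ] F}
    (hWV : W ∘L V = .id ℝ F) {y : ℝ → E} (hy : ∀ t, HasDerivAt y (L (y t)) t) {c : ℝ → F}
    (hyc : ∀ t, y t = V (c t)) (t : ℝ) : HasDerivAt c (A (c t)) t := by
  have hWVx (x : F) : W (V x) = x := DFunLike.congr_fun hWV x
  have hc : c = fun s => W (y s) := funext fun s => by rw [hyc s, hWVx]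
  have hA : W (L (y t)) = A (c t) := by
    rw [hyc t, ← hWVx (A (c t))]
    exact congrArg W (DFunLike.congr_fun hLV (c t))
  rw [← hA, hc]
  exact W.hasFDerivAt.comp_hasDerivAt t (hy t)

theorem linearODE_existsUnique_reduction [CompleteSpace F] (hLV : L ∘L V = V ∘L A)
    {W : E →L[ℝ] F} (hWV : W ∘L V = .id ℝ F) {y : ℝ → E}
    (hy : ∀ t, HasDerivAt y (L (y t)) t) (hy₀ : ∃ c₀, y 0 = V c₀) :
    (∃! c : ℝ → F, Differentiable ℝ c ∧ ∀ t, y t = V (c t)) ∧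
      ∀ c : ℝ → F, (Differentiable ℝ c ∧ ∀ t, y t = V (c t)) →
        ∀ t, HasDerivAt c (A (c t)) t := by
  obtain ⟨c₀, hy₀⟩ := hy₀
  have hV : Function.Injective V := Function.LeftInverse.injective (DFunLike.congr_fun hWV)
  have hyV := linearODE_eq_map_exp_smul hLV hy hy₀
  refine ⟨⟨fun t => exp (t • A) c₀, ⟨?_, fun t => congrFun hyV t⟩, ?_⟩,
    fun c hc => linearODE_reduced_hasDerivAt hLV hWV hy hc.2⟩
  · exact fun t => (A.hasDerivAt_exp_smul_apply c₀ t).differentiableAt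
  · rintro c ⟨-, hyc⟩
    exact funext fun t => hV ((hyc t).symm.trans (congrFun hyV t))

end LinearODE

namespace Matrix

variable {l m n : Type*} [Fintype n]

noncomputable def mulVecCLM (M : Matrix m n ℝ) : (n → ℝ) →L[ℝ] (m → ℝ) :=
  LinearMap.toContinuousLinearMap M.mulVecLin

@[simp]
theorem mulVecCLM_apply (M : Matrix m n ℝ) (x : n → ℝ) : M.mulVecCLM x = M.mulVec x := rfl

theorem mulVecCLM_mul [Fintype m] (M : Matrix l m ℝ) (N : Matrix m n ℝ) :
    (M * N).mulVecCLM = M.mulVecCLM ∘L N.mulVecCLM := by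
  ext x : 1
  simp [mulVec_mulVec]

theorem mulVecCLM_one [DecidableEq n] : (1 : Matrix n n ℝ).mulVecCLM = .id ℝ _ := by
  ext x : 1
  simp

theorem linearODE_existsUnique_reduction [Fintype m] [DecidableEq n] {L : Matrix m m ℝ}
    {V : Matrix m n ℝ} {A : Matrix n n ℝ} {W : Matrix n m ℝ} (hLV : L * V = V * A) (hWV : W * V = 1)
    {y : ℝ → m → ℝ} (hy : ∀ t, HasDerivAt y (L.mulVec (y t)) t)
    (hy₀ : ∃ c₀, y 0 = V.mulVec c₀) :
    (∃! c : ℝ → n → ℝ, Differentiable ℝ c ∧ ∀ t, y t = V.mulVec (c t)) ∧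
      ∀ c : ℝ → n → ℝ, (Differentiable ℝ c ∧ ∀ t, y t = V.mulVec (c t)) →
        ∀ t, HasDerivAt c (A.mulVec (c t)) t :=
  _root_.linearODE_existsUnique_reduction (A := A.mulVecCLM) (W := W.mulVecCLM)
    (by rw [← mulVecCLM_mul, hLV, mulVecCLM_mul]) (by rw [← mulVecCLM_mul, hWV, mulVecCLM_one])
    hy hy₀

end Matrix

-- `27𝓛`, `81V` and `27A` as integer matrices, so that `𝓛V = VA` is decided by computation.
def L00ℤ : Matrix (Fin 3) (Fin 3) ℤ := !![0,0,0; 0,-27,0; 0,0,-81]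
def L10ℤ : Matrix (Fin 3) (Fin 3) ℤ := !![-9,0,-36; 0,-27,0; -18,0,9]
def L01ℤ : Matrix (Fin 3) (Fin 3) ℤ := !![0,-18,0; -27,0,-27; 0,-9,0]

def blockOfℤ : Fin 6 → Fin 6 → Matrix (Fin 3) (Fin 3) ℤ := fun i j =>
  if i = j then L00ℤ
  else if (i, j) = (0, 1) ∨ (i, j) = (1, 3) ∨ (i, j) = (2, 4) then L10ℤ
  else if (i, j) = (0, 2) ∨ (i, j) = (1, 4) ∨ (i, j) = (2, 5) then L01ℤ
  else 0

def calLℤ : Matrix (Fin 18) (Fin 18) ℤ :=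
  Matrix.of fun i j =>
    blockOfℤ ⟨i.val / 3, by omega⟩ ⟨j.val / 3, by omega⟩
      ⟨i.val % 3, by omega⟩ ⟨j.val % 3, by omega⟩

def stdEℤ (k : Fin 18) : Fin 18 → ℤ := fun i => if i = k then 1 else 0

def Vmatℤ : Matrix (Fin 18) (Fin 6) ℤ :=
  Matrix.of fun i j =>
    (![ 81 • stdEℤ 0,
        -18 • stdEℤ 2 + 81 • stdEℤ 3,
        -81 • stdEℤ 1 + 81 • stdEℤ 6,
        -4 • stdEℤ 2 - 18 • stdEℤ 5 + 81 • stdEℤ 9,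
        72 • stdEℤ 1 - 81 • stdEℤ 4 - 18 • stdEℤ 8 + 81 • stdEℤ 12,
        9 • stdEℤ 2 - 81 • stdEℤ 7 + 81 • stdEℤ 15 ] j) i

def Amatℤ : Matrix (Fin 6) (Fin 6) ℤ :=
  !![0, -9, 0, 8, 0, 18;
     0, 0, 0, -9, 0, 0;
     0, 0, 0, 0, -9, 0;
     0, 0, 0, 0, 0, 0;
     0, 0, 0, 0, 0, 0;
     0, 0, 0, 0, 0, 0]

set_option maxHeartbeats 2000000 in
theorem calLℤ_mul_Vmatℤ : calLℤ * Vmatℤ = Vmatℤ * Amatℤ := by decide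

theorem blockOf_eq_smul_map (i j : Fin 6) :
    blockOf i j = (27 : ℝ)⁻¹ • (blockOfℤ i j).map (Int.castRingHom ℝ) := by
  ext a b
  unfold blockOf blockOfℤ
  split_ifs <;> fin_cases a <;> fin_cases b <;> norm_num [L00, L00ℤ, L10, L10ℤ, L01, L01ℤ]

theorem calL_eq_smul_map : calL = (27 : ℝ)⁻¹ • calLℤ.map (Int.castRingHom ℝ) := by
  ext i j
  simp only [calL, calLℤ, blockOf_eq_smul_map]
  rfl

theorem Vmat_eq_smul_map : Vmat = (81 : ℝ)⁻¹ • Vmatℤ.map (Int.castRingHom ℝ) := by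
  ext i j
  fin_cases j <;>
    simp [Vmat, Vmatℤ, stdE, stdEℤ, apply_ite (Int.cast : ℤ → ℝ)] <;>
    split_ifs <;> norm_num

theorem Amat_eq_smul_map : Amat = (27 : ℝ)⁻¹ • Amatℤ.map (Int.castRingHom ℝ) := by
  ext i j
  fin_cases i <;> fin_cases j <;> norm_num [Amat, Amatℤ]

theorem calL_mul_Vmat : calL * Vmat = Vmat * Amat := by
  rw [calL_eq_smul_map, Vmat_eq_smul_map, Amat_eq_smul_map, Matrix.smul_mul, Matrix.mul_smul,
    Matrix.smul_mul, Matrix.mul_smul, smul_smul, smul_smul, mul_comm, ← Matrix.map_mul,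
    ← Matrix.map_mul, calLℤ_mul_Vmatℤ]

def pivot (j : Fin 6) : Fin 18 := ⟨3 * j, by omega⟩

noncomputable def Wmat : Matrix (Fin 6) (Fin 18) ℝ :=
  Matrix.of fun j i => if i = pivot j then 1 else 0

theorem Wmat_mul_Vmat : Wmat * Vmat = 1 := by
  ext i j
  simp only [Wmat, Matrix.mul_apply, Matrix.of_apply, ite_mul, one_mul, zero_mul,
    Finset.sum_ite_eq', Finset.mem_univ, if_true]
  fin_cases i <;> fin_cases j <;> simp [Vmat, stdE, pivot]

theorem Amat_mulVec_apply_zero (c : Fin 6 → ℝ) :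
    (Amat.mulVec c) 0 = -(1/3) * c 1 + (8/27) * c 3 + (2/3) * c 5 := by
  simp [Amat, Matrix.mulVec, dotProduct, Fin.sum_univ_succ]
  ring

/-- If `y′ = 𝓛y` and `y(0)` lies in the column space of `V`, then there is a unique
differentiable `c : ℝ → ℝ⁶` with `y = Vc`; this `c` satisfies `c′ = Ac`, and its first
coordinate obeys `c₀₀′ = −(1/3)c₁₀ + (8/27)c₂₀ + (2/3)c₀₂`. -/
theorem slow_subspace_solution_reduction
    (y : ℝ → Fin 18 → ℝ)
    (hy : ∀ t : ℝ, HasDerivAt y (calL.mulVec (y t)) t)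
    (hy0 : ∃ c₀ : Fin 6 → ℝ, y 0 = Vmat.mulVec c₀) :
    (∃! c : ℝ → Fin 6 → ℝ,
      Differentiable ℝ c ∧ ∀ t : ℝ, y t = Vmat.mulVec (c t)) ∧
    (∀ c : ℝ → Fin 6 → ℝ,
      (Differentiable ℝ c ∧ ∀ t : ℝ, y t = Vmat.mulVec (c t)) →
      (∀ t : ℝ, HasDerivAt c (Amat.mulVec (c t)) t) ∧
      (∀ t : ℝ, HasDerivAt (fun s => c s 0)
        (-(1/3) * c t 1 + (8/27) * c t 3 + (2/3) * c t 5) t)) := by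
  obtain ⟨hexists, hreduced⟩ :=
    Matrix.linearODE_existsUnique_reduction calL_mul_Vmat Wmat_mul_Vmat hy hy0
  refine ⟨hexists, fun c hc => ⟨hreduced c hc, fun t => ?_⟩⟩
  simpa [Amat_mulVec_apply_zero] using hasDerivAt_pi.1 (hreduced c hc t) 0
end

section
/- Let U be a real normed vector space, M, N ∈ ℕ, and for each multi-index k ∈ ℕ^M with |k| ≤ N let L_k : U → U be a continuous linear map. Suppose that for each multi-index n with |n| ≤ N there are functions u_n : ℝ → U (differentiable) and r_n : ℝ → U satisfying, for all t, u_n′(t) = Σ_{|k| ≤ N−|n|} L_k u_{n+k}(t) + r_n(t). Define the U-valued polynomial of degree ≤ N, ũ(t), by its coefficient family (ξⁿ/n!-coefficient equal to u_n(t)). Then ũ is differentiable coefficient-wise and satisfies, as an identity of U-valued polynomials for every t, ∂ₜũ(t) = Σ_{|k| ≤ N} L_k ∂_ξ^k ũ(t) + r̃(t), where r̃(t) is the U-valued polynomial whose ξⁿ/n!-coefficient is r_n(t) and L_k acts on a polynomial coefficient-wise. -/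
/-! In the normalisation `ũ = Σ u_n ξⁿ/n!` the operator `∂_ξ^ℓ` merely shifts coefficients:
the `ξⁿ/n!`-coefficient of `∂_ξ^ℓ ũ` is `u_{n+ℓ}` (or `0` once `|n+ℓ| > N`). Hence the
`ξⁿ`-coefficient of `Σ_{|k| ≤ N} L_k ∂_ξ^k ũ + r̃` is `(Σ_{|k| ≤ N-|n|} L_k u_{n+k} + r_n)/n!`,
which is the given derivative of `u_n` divided by `n!`. -/

/-- total degree `|n| = n₁ + ⋯ + n_M` of a multi-index. -/
def mdeg {M : ℕ} (n : Fin M → ℕ) : ℕ := ∑ i, n i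

/-- multi-index factorial `n! = n₁!⋯n_M!`. -/
def mfact {M : ℕ} (n : Fin M → ℕ) : ℕ := ∏ i, Nat.factorial (n i)

/-- the finite set of multi-indices in `ℕ^M` of total degree at most `d`. -/
def mIdxLe (M d : ℕ) : Finset (Fin M → ℕ) :=
  (Fintype.piFinset fun _ : Fin M => Finset.range (d + 1)).filter fun n => mdeg n ≤ d

/-- the finite set of multi-indices `k ≤ n` (componentwise). -/
def mIic {M : ℕ} (n : Fin M → ℕ) : Finset (Fin M → ℕ) :=
  Fintype.piFinset fun i => Finset.range (n i + 1)

/-- A `U`-valued polynomial of degree ≤ N in `ξ ∈ ℝ^M` is represented by its family of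
`ξ^k`-coefficients (zero beyond degree `N`).  `pder ℓ` is the formal derivative `∂_ξ^ℓ`,
sending the coefficient family `c` to the one whose `ξ^k`-coefficient is
`((k+ℓ)!/k!) c_{k+ℓ}`. -/
noncomputable def pder {M : ℕ} {U : Type*} [AddCommGroup U] [Module ℝ U]
    (ℓ : Fin M → ℕ) (c : (Fin M → ℕ) → U) : (Fin M → ℕ) → U :=
  fun k => ((mfact (k + ℓ) : ℝ) / (mfact k : ℝ)) • c (k + ℓ)

/-- the `U`-valued polynomial of degree ≤ N whose `ξⁿ/n!`-coefficient is `u_n`, i.e. whose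
`ξⁿ`-coefficient is `u_n/n!` for `|n| ≤ N` and `0` otherwise. -/
noncomputable def genPoly {M : ℕ} {U : Type*} [AddCommGroup U] [Module ℝ U]
    (N : ℕ) (u : (Fin M → ℕ) → U) : (Fin M → ℕ) → U :=
  fun n => if mdeg n ≤ N then ((mfact n : ℝ))⁻¹ • u n else 0

lemma mem_mIdxLe {M d : ℕ} {k : Fin M → ℕ} : k ∈ mIdxLe M d ↔ mdeg k ≤ d := by
  refine ⟨fun h => (Finset.mem_filter.mp h).2, fun h => Finset.mem_filter.mpr ⟨?_, h⟩⟩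
  refine Fintype.mem_piFinset.mpr fun i => Finset.mem_range_succ_iff.mpr ?_
  exact (Finset.single_le_sum (fun j _ => Nat.zero_le (k j)) (Finset.mem_univ i)).trans h

lemma mdeg_add {M : ℕ} (n k : Fin M → ℕ) : mdeg (n + k) = mdeg n + mdeg k :=
  Finset.sum_add_distrib

lemma mfact_cast_ne_zero {M : ℕ} (n : Fin M → ℕ) : (mfact n : ℝ) ≠ 0 :=
  Nat.cast_ne_zero.mpr (Finset.prod_ne_zero_iff.mpr fun i _ => Nat.factorial_ne_zero (n i))

lemma mIdxLe_filter_mdeg_add_le {M N : ℕ} {n : Fin M → ℕ} (hn : mdeg n ≤ N) :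
    (mIdxLe M N).filter (fun k => mdeg (n + k) ≤ N) = mIdxLe M (N - mdeg n) := by
  ext k
  simp only [Finset.mem_filter, mem_mIdxLe, mdeg_add]
  omega

section GeneratingPolynomial

variable {M : ℕ} {U V : Type*} [AddCommGroup U] [Module ℝ U] [AddCommGroup V] [Module ℝ V]

lemma genPoly_of_mdeg_le {N : ℕ} (c : (Fin M → ℕ) → U) {n : Fin M → ℕ} (hn : mdeg n ≤ N) :
    genPoly N c n = (mfact n : ℝ)⁻¹ • c n :=
  if_pos hn

lemma pder_genPoly (N : ℕ) (ℓ : Fin M → ℕ) (c : (Fin M → ℕ) → U) (n : Fin M → ℕ) :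
    pder ℓ (genPoly N c) n = (mfact n : ℝ)⁻¹ • if mdeg (n + ℓ) ≤ N then c (n + ℓ) else 0 := by
  unfold pder genPoly
  split_ifs
  · rw [smul_smul, div_mul_eq_mul_div, mul_inv_cancel₀ (mfact_cast_ne_zero _), one_div]
  · rw [smul_zero, smul_zero]

lemma sum_map_pder_genPoly {N : ℕ} (L : (Fin M → ℕ) → U →ₗ[ℝ] V) (c : (Fin M → ℕ) → U)
    {n : Fin M → ℕ} (hn : mdeg n ≤ N) :
    ∑ k ∈ mIdxLe M N, L k (pder k (genPoly N c) n)
      = (mfact n : ℝ)⁻¹ • ∑ k ∈ mIdxLe M (N - mdeg n), L k (c (n + k)) := by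
  simp only [pder_genPoly, map_smul, apply_ite (L _), map_zero]
  rw [← Finset.smul_sum, ← Finset.sum_filter, mIdxLe_filter_mdeg_add_le hn]

end GeneratingPolynomial

/-- If the local Taylor coefficients `u_n` satisfy the exact ODEs
`u_n′ = Σ_{|k| ≤ N−|n|} L_k u_{n+k} + r_n`, then the generating multinomial `ũ`
satisfies (coefficient-wise) the PDE `∂ₜũ = Σ_{|k| ≤ N} L_k ∂_ξ^k ũ + r̃`. -/
theorem generating_multinomial_equivalent_dynamics
    {U : Type*} [NormedAddCommGroup U] [NormedSpace ℝ U]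
    (M N : ℕ)
    (L : (Fin M → ℕ) → U →L[ℝ] U)
    (u r : (Fin M → ℕ) → ℝ → U)
    (hu : ∀ n : Fin M → ℕ, mdeg n ≤ N → ∀ t : ℝ,
      HasDerivAt (u n)
        ((∑ k ∈ mIdxLe M (N - mdeg n), L k (u (n + k) t)) + r n t) t) :
    ∀ n : Fin M → ℕ, mdeg n ≤ N → ∀ t : ℝ,
      HasDerivAt (fun s => genPoly N (fun p => u p s) n)
        ((∑ k ∈ mIdxLe M N, L k (pder k (genPoly N (fun p => u p t)) n))
          + genPoly N (fun p => r p t) n) t := by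
  intro n hn t
  have hrhs := sum_map_pder_genPoly (fun k => (L k : U →ₗ[ℝ] U)) (fun p => u p t) hn
  simp only [ContinuousLinearMap.coe_coe] at hrhs
  simp only [genPoly_of_mdeg_le _ hn, hrhs, ← smul_add]
  exact (hu n hn t).const_smul _
end

section
/- Let U be a real inner product space, m ∈ ℕ, M, N ∈ ℕ, and for multi-indices k ∈ ℕ^M with |k| ≤ N let L_k : U → U be linear. Let Z, V⁰ : Fin m → U satisfy ⟨Z_i, V⁰_j⟩ = δ_{ij}, let A₀ ∈ ℝ^{m×m} satisfy L₀V⁰_j = Σ_i (A₀)_{ij} V⁰_i for all j, and suppose ⟨Z_i, L₀w⟩ = Σ_j (A₀)_{ij} ⟨Z_j, w⟩ for every w ∈ U and every i (the adjoint intertwining condition). Fix a multi-index n with 0 < |n| ≤ N, suppose given V^k : Fin m → U for all k ≤ n with k ≠ n and 0 < |k|, each satisfying ⟨Z_i, V^k_j⟩ = 0, and arbitrary matrices A_k ∈ ℝ^{m×m} for 0 < |k| < |n|, k ≤ n. Define (A_n)_{ij} := Σ_{0<k≤n} ⟨Z_i, (L_k V^{n−k})_j⟩. Then the right-hand side R_j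 := −Σ_{0<k≤n}(L_kV^{n−k})_j + Σ_{0<k≤n} Σ_i V^{n−k}_i (A_k)_{ij} satisfies ⟨Z_i, R_j⟩ = 0 for all i, j; moreover for any X : Fin m → U with ⟨Z_i, X_j⟩ = 0 for all i,j, the left-hand side L₀X_j − Σ_i X_i (A₀)_{ij} also has vanishing inner products with every Z_i. -/
open scoped RealInnerProductSpace

/-- Solvability computation for the recursive equations defining the macroscale model:
with `A_n` chosen by the stated formula, the right-hand side `R` of the recursion is
orthogonal to the adjoint centre modes `Z_i`, and the homological operator
`X ↦ L₀X − XA₀` preserves orthogonality to the `Z_i`. -/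
theorem recursion_rhs_in_range
    {U : Type*} [NormedAddCommGroup U] [InnerProductSpace ℝ U]
    (m M N : ℕ)
    (L : (Fin M → ℕ) → U →ₗ[ℝ] U)
    (Z V0 : Fin m → U)
    (hZV : ∀ i j, ⟪Z i, V0 j⟫ = if i = j then (1 : ℝ) else 0)
    (A0 : Matrix (Fin m) (Fin m) ℝ)
    (hA0 : ∀ j, L 0 (V0 j) = ∑ i, A0 i j • V0 i)
    (hadj : ∀ w : U, ∀ i, ⟪Z i, L 0 w⟫ = ∑ j, A0 i j * ⟪Z j, w⟫)
    (n : Fin M → ℕ) (hn0 : 0 < mdeg n) (hnN : mdeg n ≤ N)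
    (Vv : (Fin M → ℕ) → Fin m → U)
    (hV0 : Vv 0 = V0)
    (hVorth : ∀ k : Fin M → ℕ, k ≤ n → k ≠ n → 0 < mdeg k →
      ∀ i j, ⟪Z i, Vv k j⟫ = 0)
    (Am : (Fin M → ℕ) → Matrix (Fin m) (Fin m) ℝ)
    (An : Matrix (Fin m) (Fin m) ℝ)
    (hAn : ∀ i j, An i j = ∑ k ∈ (mIic n).erase 0, ⟪Z i, L k (Vv (n - k) j)⟫)
    (R : Fin m → U)
    (hR : ∀ j, R j = -(∑ k ∈ (mIic n).erase 0, L k (Vv (n - k) j))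
        + ∑ k ∈ (mIic n).erase 0, ∑ i, (if k = n then An else Am k) i j • Vv (n - k) i) :
    (∀ i j, ⟪Z i, R j⟫ = 0) ∧
    (∀ X : Fin m → U, (∀ i j, ⟪Z i, X j⟫ = 0) →
      ∀ i j, ⟪Z i, L 0 (X j) - ∑ i', A0 i' j • X i'⟫ = 0) := by

  have hsub : ∀ k ∈ (mIic n).erase 0, k ≤ n ∧ k ≠ 0 := by
    intro k hk
    rw [Finset.mem_erase, mIic, Fintype.mem_piFinset] at hk
    exact ⟨fun i => Nat.lt_succ_iff.mp (Finset.mem_range.mp (hk.2 i)), hk.1⟩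
  have hZVv : ∀ k ∈ (mIic n).erase 0, k ≠ n → ∀ i j, ⟪Z i, Vv (n - k) j⟫ = 0 := by
    intro k hk hkn i j
    obtain ⟨hkle, hk0⟩ := hsub k hk
    have h1 : n - k ≤ n := fun i => Nat.sub_le _ _
    obtain ⟨i0, hi0⟩ : ∃ i, k i ≠ 0 := by
      by_contra h; push_neg at h; exact hk0 (funext h)
    have h2 : n - k ≠ n := by
      intro h
      have h' : n i0 - k i0 = n i0 := congrFun h i0
      have hp : 0 < k i0 := Nat.pos_of_ne_zero hi0
      exact (Nat.sub_lt (lt_of_lt_of_le hp (hkle i0)) hp).ne h' 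
    obtain ⟨i1, hi1⟩ : ∃ i, k i ≠ n i := by
      by_contra h; push_neg at h; exact hkn (funext h)
    have h3 : 0 < mdeg (n - k) := by
      have hlt : 0 < (n - k) i1 := Nat.sub_pos_of_lt (lt_of_le_of_ne (hkle i1) hi1)
      unfold mdeg
      exact lt_of_lt_of_le hlt
        (Finset.single_le_sum (f := fun i => (n - k) i) (fun _ _ => Nat.zero_le _)
          (Finset.mem_univ i1))
    exact hVorth (n - k) h1 h2 h3 i j
  refine ⟨?_, ?_⟩
  · intro i j
    have hnmem : n ∈ (mIic n).erase 0 := by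
      rw [Finset.mem_erase, mIic, Fintype.mem_piFinset]
      constructor
      · intro h
        rw [h] at hn0
        simp [mdeg] at hn0
      · intro i; exact Finset.mem_range.mpr (Nat.lt_succ_self _)
    rw [hR j, inner_add_right, inner_neg_right, inner_sum, inner_sum]
    have e2 : ∀ k ∈ (mIic n).erase 0,
        ⟪Z i, ∑ i', (if k = n then An else Am k) i' j • Vv (n - k) i'⟫
          = if k = n then An i j else 0 := by
      intro k hk
      rw [inner_sum]
      by_cases hkn : k = n
      · subst hkn
        simp [real_inner_smul_right, hV0, hZV, mul_ite]
      · simp [real_inner_smul_right, hZVv k hk hkn, hkn]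
    rw [Finset.sum_congr rfl e2, Finset.sum_ite_eq' ((mIic n).erase 0) n (fun _ => An i j),
      if_pos hnmem, ← hAn i j]
    ring
  · intro X hX i j
    rw [inner_sub_right, hadj, inner_sum]
    simp [real_inner_smul_right, hX]
end

section
/- Let U be a real vector space, m, M, N ∈ ℕ, and let V^k : Fin m → U be arbitrary families indexed by multi-indices k ∈ ℕ^M with |k| ≤ N, such that the m vectors V⁰_1, …, V⁰_m are linearly independent in U. Define, for each multi-index |n| ≤ N, the U-valued polynomials 𝓥^n_j := Σ_{0≤k≤n} (ξ^k/k!) V^{n−k}_j of degree ≤ N in ξ ∈ ℝ^M. Then the m·binom(N+M, M) polynomials {𝓥^n_j : |n| ≤ N, j ∈ Fin m} are linearly independent in the space of U-valued polynomials of degree ≤ N. -/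
/-- The generating-multinomial basis vectors `𝓥^n_j = Σ_{k ≤ n} (ξ^k/k!) V^{n−k}_j`,
as `U`-valued polynomials of degree ≤ N represented by their coefficient families. -/
noncomputable def calV {M m : ℕ} {U : Type*} [AddCommGroup U] [Module ℝ U]
    (V : (Fin M → ℕ) → Fin m → U) (n : Fin M → ℕ) (j : Fin m) : (Fin M → ℕ) → U :=
  fun k => if ∀ i, k i ≤ n i then ((mfact k : ℝ))⁻¹ • V (n - k) j else 0

/-- the operator `𝓛̃ = Σ_{|ℓ| ≤ N} L_ℓ ∂_ξ^ℓ` on `U`-valued polynomials of degree ≤ N,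
with each `L_ℓ` acting coefficient-wise. -/
noncomputable def Ltilde {M : ℕ} {U : Type*} [AddCommGroup U] [Module ℝ U]
    (N : ℕ) (L : (Fin M → ℕ) → U →ₗ[ℝ] U) (c : (Fin M → ℕ) → U) : (Fin M → ℕ) → U :=
  fun k => ∑ ℓ ∈ mIdxLe M N, L ℓ (pder ℓ c k)

/-- If the `m` vectors `V⁰_1, …, V⁰_m` are linearly independent in `U`, then the
`m·binom(N+M,M)` polynomials `𝓥^n_j` (for `|n| ≤ N`, `j ∈ Fin m`) are linearly
independent in the space of `U`-valued polynomials of degree ≤ N. -/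
theorem calV_linearIndependent
    {U : Type*} [AddCommGroup U] [Module ℝ U]
    (m M N : ℕ)
    (V : (Fin M → ℕ) → Fin m → U)
    (hV0 : LinearIndependent ℝ (V 0)) :
    LinearIndependent ℝ
      (fun p : {n : Fin M → ℕ // mdeg n ≤ N} × Fin m => calV V p.1.val p.2) := by
  rw [linearIndependent_iff]
  intro l hl
  by_contra hne
  obtain ⟨p, hp, hmax⟩ := l.support.exists_max_image (fun q => mdeg q.1.val)
    (Finsupp.support_nonempty_iff.2 hne)
  set k := p.1.val with hk
  have hmf : (mfact k : ℝ) ≠ 0 := by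
    have : 0 < mfact k := Finset.prod_pos fun i _ => Nat.factorial_pos _
    exact_mod_cast this.ne'
  -- evaluate the relation at k
  have h0 : ∑ q ∈ l.support, l q • calV V q.1.val q.2 k = 0 := by
    have := congrFun (by simpa [Finsupp.linearCombination_apply, Finsupp.sum] using hl) k
    simpa [Finset.sum_apply] using this
  -- each term vanishes unless q.1 = p.1
  have hterm : ∀ q ∈ l.support, l q • calV V q.1.val q.2 k
      = if q.1 = p.1 then l q • ((mfact k : ℝ)⁻¹ • V 0 q.2) else 0 := by
    intro q hq
    by_cases hqp : q.1 = p.1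
    · have : ∀ i, k i ≤ q.1.val i := by intro i; rw [hqp]
      simp [calV, this, hqp, hk]
    · have hnle : ¬ ∀ i, k i ≤ q.1.val i := by
        intro hle
        apply hqp
        have hsum : mdeg q.1.val ≤ mdeg k := hmax q hq
        have h1 : ∑ i, k i ≤ ∑ i, q.1.val i := Finset.sum_le_sum fun i _ => hle i
        have h2 : ∑ i, q.1.val i = ∑ i, k i := le_antisymm hsum h1
        exact Subtype.ext (funext fun i =>
          ((Finset.sum_eq_sum_iff_of_le fun i _ => hle i).1 h2.symm i (Finset.mem_univ i)).symm)
      simp [calV, hnle, hqp]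
  -- rewrite the sum as a sum over the fibre above p.1
  have h1 : ∑ q ∈ l.support.filter (fun q => q.1 = p.1),
      l q • ((mfact k : ℝ)⁻¹ • V 0 q.2) = 0 := by
    rw [Finset.sum_filter, ← Finset.sum_congr rfl hterm]
    exact h0
  have hsub : l.support.filter (fun q => q.1 = p.1)
      ⊆ (Finset.univ : Finset (Fin m)).image (fun j => ((p.1, j) : {n : Fin M → ℕ // mdeg n ≤ N} × Fin m)) := by
    intro q hq
    simp only [Finset.mem_filter] at hq
    exact Finset.mem_image.2 ⟨q.2, Finset.mem_univ _, by rw [← hq.2]⟩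
  have h2 : ∑ j : Fin m, l (p.1, j) • ((mfact k : ℝ)⁻¹ • V 0 j) = 0 := by
    have himg := Finset.sum_image (s := (Finset.univ : Finset (Fin m)))
      (g := fun j => ((p.1, j) : {n : Fin M → ℕ // mdeg n ≤ N} × Fin m))
      (f := fun q => l q • ((mfact k : ℝ)⁻¹ • V 0 q.2))
      (fun a _ b _ h => by simpa using h)
    rw [← himg, ← Finset.sum_subset hsub]
    · exact h1
    · intro q hq hq2
      simp only [Finset.mem_filter, not_and] at hq2
      obtain ⟨j, -, rfl⟩ := Finset.mem_image.1 hq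
      rw [Finsupp.notMem_support_iff.1 (fun h => hq2 h rfl)]
      simp
  have h3 : ∀ j, (mfact k : ℝ)⁻¹ * l (p.1, j) = 0 := by
    apply Fintype.linearIndependent_iff.1 hV0
    rw [← h2]
    congr 1
    ext j
    rw [mul_comm, mul_smul]
  have := h3 p.2
  rcases mul_eq_zero.1 this with h | h
  · exact (inv_ne_zero hmf) h
  · exact Finsupp.mem_support_iff.1 hp h
end

section
/- Let U be a real inner product space, m, M, N ∈ ℕ, and let Z : Fin m → U and families V^k : Fin m → U (multi-indices |k| ≤ N) satisfy ⟨Z_i, V⁰_j⟩ = δ_{ij} and ⟨Z_i, V^k_j⟩ = 0 for all i,j whenever 0 < |k| ≤ N. Define the U-valued polynomials 𝓥^n_j := Σ_{0≤k≤n}(ξ^k/k!)V^{n−k}_j of degree ≤ N in ξ ∈ ℝ^M. Then for all multi-indices ℓ, n with |ℓ|, |n| ≤ N, evaluating the derivative at ξ = 0 gives ⟨Z_i, (∂_ξ^ℓ 𝓥^n)_j(0)⟩ = δ_{ij} if ℓ = n, and 0 if ℓ ≠ n (for all i, j). -/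
open scoped RealInnerProductSpace

/-- Evaluating `∂_ξ^ℓ 𝓥^n` at `ξ = 0` (i.e. taking the constant coefficient of the
derivative) and pairing with the adjoint centre modes gives
`⟨Z_i, (∂_ξ^ℓ 𝓥^n)_j(0)⟩ = δ_{ij}` if `ℓ = n` and `0` otherwise. -/
theorem calV_deriv_at_zero
    {U : Type*} [NormedAddCommGroup U] [InnerProductSpace ℝ U]
    (m M N : ℕ)
    (Z : Fin m → U)
    (V : (Fin M → ℕ) → Fin m → U)
    (hZV0 : ∀ i j, ⟪Z i, V 0 j⟫ = if i = j then (1 : ℝ) else 0)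
    (horth : ∀ k : Fin M → ℕ, 0 < mdeg k → mdeg k ≤ N →
      ∀ i j, ⟪Z i, V k j⟫ = 0) :
    ∀ ℓ n : Fin M → ℕ, mdeg ℓ ≤ N → mdeg n ≤ N → ∀ i j,
      ⟪Z i, pder ℓ (calV V n j) 0⟫
        = if ℓ = n then (if i = j then (1 : ℝ) else 0) else 0 := by
  intro ℓ n hℓ hn i j
  have hfℓ : (mfact ℓ : ℝ) ≠ 0 := by
    have : 0 < mfact ℓ := Finset.prod_pos fun i _ => Nat.factorial_pos _
    exact_mod_cast this.ne'
  have h0 : mfact (0 : Fin M → ℕ) = 1 := by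
    simp [mfact, Nat.factorial]
  have hzl : (0 : Fin M → ℕ) + ℓ = ℓ := by funext i; simp
  rw [pder, hzl, h0]
  by_cases hle : ∀ i, ℓ i ≤ n i
  · rw [calV]
    rw [if_pos hle, smul_smul]
    have : (mfact ℓ : ℝ) / (1 : ℕ) * (mfact ℓ : ℝ)⁻¹ = 1 := by
      push_cast; field_simp
    rw [this, one_smul]
    by_cases heq : ℓ = n
    · rw [heq, if_pos rfl]
      have : n - n = (0 : Fin M → ℕ) := by funext t; simp
      rw [this]
      exact hZV0 i j
    · rw [if_neg heq]
      have hne : n - ℓ ≠ 0 := by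
        intro h
        apply heq
        funext t
        have ht : n t - ℓ t = 0 := congrFun h t
        have := hle t
        omega
      have hpos : 0 < mdeg (n - ℓ) := by
        rcases Nat.eq_zero_or_pos (mdeg (n - ℓ)) with h | h
        · exfalso
          apply hne
          funext t
          have := Finset.sum_eq_zero_iff.mp h t (Finset.mem_univ t)
          simpa using this
        · exact h
      have hleN : mdeg (n - ℓ) ≤ N := by
        refine le_trans ?_ hn
        exact Finset.sum_le_sum fun t _ => Nat.sub_le _ _
      exact horth (n - ℓ) hpos hleN i j
  · rw [calV]
    simp only [hle, if_false, smul_zero, inner_zero_right]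
    rw [if_neg]
    intro h; subst h; exact hle fun i => le_refl _
end

section
/- Let K : ℝ² → ℝ be continuously differentiable and let u : ℝ² × ℝ² × ℝ → ℝ, written u(x₁,x₂,y₁,y₂,t), be twice continuously differentiable. Suppose that at every point, ∂ₜu = ∂_{y₁}(K(y)∂_{y₁}u) + ∂_{y₂}(K(y)∂_{y₂}u) + (∂_{y₁}K)(y)·∂_{x₁}u + 2K(y)∂_{y₁}∂_{x₁}u + (∂_{y₂}K)(y)·∂_{x₂}u + 2K(y)∂_{y₂}∂_{x₂}u + K(y)(∂_{x₁}²u + ∂_{x₂}²u), where y = (y₁,y₂). Then for every φ ∈ ℝ², the function ů(x,t) := u(x₁,x₂, x₁+φ₁, x₂+φ₂, t) satisfies, at every point, ∂ₜů = ∂_{x₁}(K(x+φ)∂_{x₁}ů) + ∂_{x₂}(K(x+φ)∂_{x₂}ů). -/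
/-- partial derivative of a five-argument function in its 1st argument (`x₁`). -/
noncomputable def px1 (f : ℝ → ℝ → ℝ → ℝ → ℝ → ℝ) : ℝ → ℝ → ℝ → ℝ → ℝ → ℝ :=
  fun x₁ x₂ y₁ y₂ t => deriv (fun s => f s x₂ y₁ y₂ t) x₁

/-- partial derivative in the 2nd argument (`x₂`). -/
noncomputable def px2 (f : ℝ → ℝ → ℝ → ℝ → ℝ → ℝ) : ℝ → ℝ → ℝ → ℝ → ℝ → ℝ :=
  fun x₁ x₂ y₁ y₂ t => deriv (fun s => f x₁ s y₁ y₂ t) x₂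

/-- partial derivative in the 3rd argument (`y₁`). -/
noncomputable def py1 (f : ℝ → ℝ → ℝ → ℝ → ℝ → ℝ) : ℝ → ℝ → ℝ → ℝ → ℝ → ℝ :=
  fun x₁ x₂ y₁ y₂ t => deriv (fun s => f x₁ x₂ s y₂ t) y₁

/-- partial derivative in the 4th argument (`y₂`). -/
noncomputable def py2 (f : ℝ → ℝ → ℝ → ℝ → ℝ → ℝ) : ℝ → ℝ → ℝ → ℝ → ℝ → ℝ :=
  fun x₁ x₂ y₁ y₂ t => deriv (fun s => f x₁ x₂ y₁ s t) y₂

/-- partial derivative in the 5th argument (`t`). -/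
noncomputable def pt5 (f : ℝ → ℝ → ℝ → ℝ → ℝ → ℝ) : ℝ → ℝ → ℝ → ℝ → ℝ → ℝ :=
  fun x₁ x₂ y₁ y₂ t => deriv (fun s => f x₁ x₂ y₁ y₂ s) t

/-! On the diagonal `y = x + φ` the chain rule gives `∂_{xᵢ} ů = (∂_{xᵢ} + ∂_{yᵢ}) u`, so by the
product rule `∂_{xᵢ}(K ∂_{xᵢ} ů)` is `∂_{yᵢ}(K ∂_{yᵢ} u) + ∂_{yᵢ}K ∂_{xᵢ} u + K ∂²_{xᵢ} u` plus the
two mixed terms `K ∂_{xᵢ}∂_{yᵢ} u` and `K ∂_{yᵢ}∂_{xᵢ} u`, which coincide because `u` is `C²`.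
Summing over `i = 1, 2` gives the right-hand side of the embedded PDE, i.e. `∂ₜ u = ∂ₜ ů`. -/

section CurveCalculus

variable {E G : Type*} [NormedAddCommGroup E] [NormedSpace ℝ E]
  [NormedAddCommGroup G] [NormedSpace ℝ G] {f : E → G} {γ : ℝ → E} {v : E} {s : ℝ}

theorem deriv_comp_of_hasDerivAt (hf : DifferentiableAt ℝ f (γ s)) (hγ : HasDerivAt γ v s) :
    deriv (fun r => f (γ r)) s = fderiv ℝ f (γ s) v :=
  (hf.hasFDerivAt.comp_hasDerivAt s hγ).deriv

theorem hasDerivAt_fderiv_apply_comp (hf : DifferentiableAt ℝ (fderiv ℝ f) (γ s))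
    (hγ : HasDerivAt γ v s) (w : E) :
    HasDerivAt (fun r => fderiv ℝ f (γ r) w) (fderiv ℝ (fderiv ℝ f) (γ s) v w) s := by
  simpa using (hf.hasFDerivAt.comp_hasDerivAt s hγ).clm_apply (hasDerivAt_const s w)

theorem deriv_deriv_comp_of_hasDerivAt (hf : Differentiable ℝ f)
    (hf' : DifferentiableAt ℝ (fderiv ℝ f) (γ s)) (hγ : ∀ r, HasDerivAt γ v r) :
    deriv (fun r => deriv (fun r' => f (γ r')) r) s = fderiv ℝ (fderiv ℝ f) (γ s) v v := by
  simp only [fun r => deriv_comp_of_hasDerivAt (hf (γ r)) (hγ r)]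
  exact (hasDerivAt_fderiv_apply_comp hf' (hγ s) v).deriv

theorem deriv_deriv_comp_of_hasDerivAt_mixed {p : ℝ → ℝ → E} {r₀ : ℝ} {a b : E}
    (hf : Differentiable ℝ f) (hf' : DifferentiableAt ℝ (fderiv ℝ f) (p r₀ s))
    (ha : ∀ s, HasDerivAt (fun r => p r s) a r₀) (hb : HasDerivAt (p r₀) b s) :
    deriv (fun s => deriv (fun r => f (p r s)) r₀) s = fderiv ℝ (fderiv ℝ f) (p r₀ s) b a := by
  simp only [fun s => deriv_comp_of_hasDerivAt (γ := fun r => p r s) (hf (p r₀ s)) (ha s)]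
  exact (hasDerivAt_fderiv_apply_comp hf' hb a).deriv

theorem deriv_mul_deriv_comp_of_hasDerivAt {f : E → ℝ} {κ : ℝ → ℝ} {k : ℝ}
    (hf : Differentiable ℝ f) (hf' : DifferentiableAt ℝ (fderiv ℝ f) (γ s))
    (hγ : ∀ r, HasDerivAt γ v r) (hκ : HasDerivAt κ k s) :
    deriv (fun r => κ r * deriv (fun r' => f (γ r')) r) s
      = k * fderiv ℝ f (γ s) v + κ s * fderiv ℝ (fderiv ℝ f) (γ s) v v := by
  simp only [fun r => deriv_comp_of_hasDerivAt (hf (γ r)) (hγ r)]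
  exact (hκ.mul (hasDerivAt_fderiv_apply_comp hf' (hγ s) v)).deriv

end CurveCalculus

-- Reducible, so that `rw` identifies `uncurry5 u (r, …)` with `u r …`.
abbrev uncurry5 (u : ℝ → ℝ → ℝ → ℝ → ℝ → ℝ) (q : ℝ × ℝ × ℝ × ℝ × ℝ) : ℝ :=
  u q.1 q.2.1 q.2.2.1 q.2.2.2.1 q.2.2.2.2

theorem deriv_mul_deriv_diagonal_fst {u : ℝ → ℝ → ℝ → ℝ → ℝ → ℝ}
    (hu : ContDiff ℝ 2 (uncurry5 u)) {κ : ℝ → ℝ} (φ x₁ x₂ y₂ t : ℝ)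
    (hκ : DifferentiableAt ℝ κ (x₁ + φ)) :
    deriv (fun s => κ (s + φ) * deriv (fun w => u w x₂ (w + φ) y₂ t) s) x₁ =
      deriv (fun s => κ s * py1 u x₁ x₂ s y₂ t) (x₁ + φ)
      + deriv κ (x₁ + φ) * px1 u x₁ x₂ (x₁ + φ) y₂ t
      + 2 * κ (x₁ + φ) * py1 (px1 u) x₁ x₂ (x₁ + φ) y₂ t
      + κ (x₁ + φ) * px1 (px1 u) x₁ x₂ (x₁ + φ) y₂ t := by
  set e₁ : ℝ × ℝ × ℝ × ℝ × ℝ := (1, 0, 0, 0, 0)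
  set e₃ : ℝ × ℝ × ℝ × ℝ × ℝ := (0, 0, 1, 0, 0)
  have hF : Differentiable ℝ (uncurry5 u) := hu.differentiable two_ne_zero
  have hF' : DifferentiableAt ℝ (fderiv ℝ (uncurry5 u)) (x₁, x₂, x₁ + φ, y₂, t) :=
    (hu.fderiv_right le_rfl).differentiable one_ne_zero _
  have hsymm : IsSymmSndFDerivAt ℝ (uncurry5 u) (x₁, x₂, x₁ + φ, y₂, t) :=
    hu.contDiffAt.isSymmSndFDerivAt (by simp)
  have hx : ∀ c r, HasDerivAt (fun r => ((r, x₂, c, y₂, t) : ℝ × ℝ × ℝ × ℝ × ℝ)) e₁ r :=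
    fun c r => (hasDerivAt_id r).prodMk ((hasDerivAt_const r x₂).prodMk
      ((hasDerivAt_const r c).prodMk ((hasDerivAt_const r y₂).prodMk (hasDerivAt_const r t))))
  have hy : ∀ r, HasDerivAt (fun r => ((x₁, x₂, r, y₂, t) : ℝ × ℝ × ℝ × ℝ × ℝ)) e₃ r :=
    fun r => (hasDerivAt_const r x₁).prodMk ((hasDerivAt_const r x₂).prodMk
      ((hasDerivAt_id r).prodMk ((hasDerivAt_const r y₂).prodMk (hasDerivAt_const r t))))
  have hdiag :
      ∀ r, HasDerivAt (fun r => ((r, x₂, r + φ, y₂, t) : ℝ × ℝ × ℝ × ℝ × ℝ)) (e₁ + e₃) r := by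
    have he : e₁ + e₃ = (1, 0, 1, 0, 0) := by simp [e₁, e₃]
    exact fun r => he ▸ (hasDerivAt_id r).prodMk ((hasDerivAt_const r x₂).prodMk
      (((hasDerivAt_id r).add_const φ).prodMk
        ((hasDerivAt_const r y₂).prodMk (hasDerivAt_const r t))))
  have hκ' := hκ.hasDerivAt
  unfold px1 py1
  rw [deriv_mul_deriv_comp_of_hasDerivAt hF hF' hdiag (hκ'.comp_add_const x₁ φ),
    deriv_mul_deriv_comp_of_hasDerivAt hF hF' hy hκ',
    deriv_comp_of_hasDerivAt (hF _) (hx (x₁ + φ) x₁),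
    deriv_deriv_comp_of_hasDerivAt_mixed (p := fun r s => (r, x₂, s, y₂, t)) hF hF'
      (fun c => hx c x₁) (hy (x₁ + φ)),
    deriv_deriv_comp_of_hasDerivAt hF hF' (hx (x₁ + φ))]
  simp only [map_add, add_apply, hsymm e₁ e₃]
  ring

theorem deriv_mul_deriv_diagonal_snd {u : ℝ → ℝ → ℝ → ℝ → ℝ → ℝ}
    (hu : ContDiff ℝ 2 (uncurry5 u)) {κ : ℝ → ℝ} (φ x₁ x₂ y₁ t : ℝ)
    (hκ : DifferentiableAt ℝ κ (x₂ + φ)) :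
    deriv (fun s => κ (s + φ) * deriv (fun w => u x₁ w y₁ (w + φ) t) s) x₂ =
      deriv (fun s => κ s * py2 u x₁ x₂ y₁ s t) (x₂ + φ)
      + deriv κ (x₂ + φ) * px2 u x₁ x₂ y₁ (x₂ + φ) t
      + 2 * κ (x₂ + φ) * py2 (px2 u) x₁ x₂ y₁ (x₂ + φ) t
      + κ (x₂ + φ) * px2 (px2 u) x₁ x₂ y₁ (x₂ + φ) t := by
  -- Exchanging the indices `1 ↔ 2` turns the `x₂`-flux into an `x₁`-flux.
  have hswap : ContDiff ℝ 2 fun q : ℝ × ℝ × ℝ × ℝ × ℝ =>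
      ((q.2.1, q.1, q.2.2.2.1, q.2.2.1, q.2.2.2.2) : ℝ × ℝ × ℝ × ℝ × ℝ) := by
    fun_prop
  exact deriv_mul_deriv_diagonal_fst (u := fun x₁ x₂ y₁ y₂ t => u x₂ x₁ y₂ y₁ t)
    (hu.comp hswap) φ x₂ x₁ y₁ t hκ

/-- If `u(x₁,x₂,y₁,y₂,t)` satisfies the embedding PDE
`∂ₜu = ∂_{y₁}(K ∂_{y₁}u) + ∂_{y₂}(K ∂_{y₂}u) + K_{y₁}∂_{x₁}u + 2K ∂_{y₁}∂_{x₁}u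
      + K_{y₂}∂_{x₂}u + 2K ∂_{y₂}∂_{x₂}u + K(∂_{x₁}²u + ∂_{x₂}²u)`,
then for every phase shift `φ` the diagonal restriction `ů(x,t) = u(x, x+φ, t)` satisfies
the heterogeneous diffusion PDE `∂ₜů = ∇·(K(x+φ)∇ů)`. -/
theorem embedding_diagonal_solves_heterogeneous_diffusion
    (K : ℝ × ℝ → ℝ) (hK : ContDiff ℝ 1 K)
    (u : ℝ → ℝ → ℝ → ℝ → ℝ → ℝ)
    (hu : ContDiff ℝ 2 (fun q : ℝ × ℝ × ℝ × ℝ × ℝ =>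
      u q.1 q.2.1 q.2.2.1 q.2.2.2.1 q.2.2.2.2))
    (hpde : ∀ x₁ x₂ y₁ y₂ t : ℝ,
      pt5 u x₁ x₂ y₁ y₂ t =
        deriv (fun s => K (s, y₂) * py1 u x₁ x₂ s y₂ t) y₁
        + deriv (fun s => K (y₁, s) * py2 u x₁ x₂ y₁ s t) y₂
        + deriv (fun s => K (s, y₂)) y₁ * px1 u x₁ x₂ y₁ y₂ t
        + 2 * K (y₁, y₂) * py1 (px1 u) x₁ x₂ y₁ y₂ t
        + deriv (fun s => K (y₁, s)) y₂ * px2 u x₁ x₂ y₁ y₂ t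
        + 2 * K (y₁, y₂) * py2 (px2 u) x₁ x₂ y₁ y₂ t
        + K (y₁, y₂) * (px1 (px1 u) x₁ x₂ y₁ y₂ t + px2 (px2 u) x₁ x₂ y₁ y₂ t)) :
    ∀ φ₁ φ₂ : ℝ,
      ∀ x₁ x₂ t : ℝ,
        deriv (fun s => u x₁ x₂ (x₁ + φ₁) (x₂ + φ₂) s) t =
          deriv (fun s => K (s + φ₁, x₂ + φ₂)
              * deriv (fun w => u w x₂ (w + φ₁) (x₂ + φ₂) t) s) x₁
          + deriv (fun s => K (x₁ + φ₁, s + φ₂)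
              * deriv (fun w => u x₁ w (x₁ + φ₁) (w + φ₂) t) s) x₂ := by
  intro φ₁ φ₂ x₁ x₂ t
  have hK' : Differentiable ℝ K := hK.differentiable one_ne_zero
  have hK₁ : DifferentiableAt ℝ (fun s => K (s, x₂ + φ₂)) (x₁ + φ₁) := by fun_prop
  have hK₂ : DifferentiableAt ℝ (fun s => K (x₁ + φ₁, s)) (x₂ + φ₂) := by fun_prop
  rw [deriv_mul_deriv_diagonal_fst hu φ₁ x₁ x₂ (x₂ + φ₂) t hK₁,
    deriv_mul_deriv_diagonal_snd hu φ₂ x₁ x₂ (x₁ + φ₁) t hK₂]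
  exact (hpde x₁ x₂ (x₁ + φ₁) (x₂ + φ₂) t).trans (by ring)
end
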